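/- For i, j ∈ {1−n,…,0}, the second partial derivative satisfies ∂²f/(∂x_i ∂x_j) = Σ over nonlinear arcs (r, s̄) of [ (Σ over directed paths p from i to r of weight(p)) · c^{s̄}_r · (Σ over directed paths q from j to s of weight(q)) ], where path weights in the original computational graph G use arc weights c^k_m = ∂φ_k/∂v_m. -/

import Mathlib

/-!
Write `v` for the node values and `C = (c^k_m)` for the (strictly triangular) matrix of arc
weights. The values satisfy `v_b = x_b` at inputs and `v_b = φ_b(v)` at internal nodes, so
differentiating once and then twice yields linear systems `w = h + C w` for the first and the
second derivatives of the nodes. Such a system is solved by path sums,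
`w_b = Σ_a PS(a, b) h_a`: splitting paths at their first arc shows that the matrix `P` of path
sums satisfies `P = I + P C`, i.e. `P (I - C) = I`.
For first derivatives `h` is the unit vector at input `i`, so `∂v_b/∂x_i = PS(i, b)`; for second
derivatives `h_k = Σ_{r,s} PS(i, r) ∂²φ_k/∂v_r∂v_s PS(j, s)`, and summing against `PS(k, b)` over
`k` produces the nonlinear-arc weights.
-/

/-- Second partial derivative ∂²g/∂x_j∂x_k. -/
noncomputable def H2 {n : ℕ} (g : (Fin n → ℝ) → ℝ) (x : Fin n → ℝ) (j k : Fin n) : ℝ :=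
  fderiv ℝ (fun y => fderiv ℝ g y (Pi.single k 1)) x (Pi.single j 1)

/-- Forward evaluation of the computational graph: `runFrom Nn φ t s w`
recomputes, in order, the values of nodes t, t+1, …, t+s-1. -/
noncomputable def runFrom (Nn : ℕ) (φ : Fin Nn → (Fin Nn → ℝ) → ℝ) :
    ℕ → ℕ → (Fin Nn → ℝ) → (Fin Nn → ℝ)
  | _, 0, w => w
  | t, s+1, w =>
    let w' := runFrom Nn φ t s w
    if h : t + s < Nn then Function.update w' ⟨t + s, h⟩ (φ ⟨t + s, h⟩ w') else w'

/-- Weight of a path (a list of nodes): product of the weights c of its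
consecutive arcs, where `c k m` is the weight of arc (m,k), i.e. ∂φ_k/∂v_m. -/
noncomputable def pathWeight {V : Type*} (c : V → V → ℝ) (l : List V) : ℝ :=
  ((l.zip l.tail).map (fun q => c q.2 q.1)).prod

section PathSum

variable {V : Type*} (A : V → V → Prop) (c : V → V → ℝ)

def pathSet (a b : V) : Set (List V) :=
  {l | l.IsChain A ∧ l.head? = some a ∧ l.getLast? = some b}

noncomputable def pathSum (a b : V) : ℝ :=
  ∑ᶠ l ∈ pathSet A a b, pathWeight c l

variable {A}

theorem finite_setOf_isChain [Preorder V] [Finite V] (hA : ∀ j k, A j k → j < k) :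
    {l : List V | l.IsChain A}.Finite := by
  have := Fintype.ofFinite V
  refine (List.finite_length_le V (Fintype.card V)).subset fun l hl => ?_
  have hlt : l.IsChain (· < ·) := List.IsChain.imp (fun {j k} => hA j k) hl
  exact (List.isChain_iff_pairwise.mp hlt).nodup.length_le_card

theorem pathSet_finite [Preorder V] [Finite V] (hA : ∀ j k, A j k → j < k) (a b : V) :
    (pathSet A a b).Finite :=
  (finite_setOf_isChain hA).subset fun _ hl => hl.1

theorem pathWeight_cons_cons (x y : V) (l : List V) :
    pathWeight c (x :: y :: l) = c y x * pathWeight c (y :: l) := by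
  simp [pathWeight]

theorem pathSet_eq_union (a b : V) :
    pathSet A a b = {l | l = [a] ∧ a = b} ∪ List.cons a '' ⋃ m ∈ {m | A a m}, pathSet A m b := by
  ext (_ | ⟨x, _ | ⟨y, l⟩⟩) <;> simp [pathSet, List.isChain_cons_cons] <;> grind

theorem pathSum_eq_ite_add_sum [Fintype V] [Preorder V] [DecidableEq V] [DecidableRel A]
    (hA : ∀ j k, A j k → j < k) (a b : V) :
    pathSum A c a b =
      (if a = b then 1 else 0) + ∑ m ∈ Finset.univ.filter (A a), c m a * pathSum A c m b := by
  have hfin := pathSet_finite hA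
  have hdisj :
      Disjoint {l | l = [a] ∧ a = b} (List.cons a '' ⋃ m ∈ {m | A a m}, pathSet A m b) := by
    refine Set.disjoint_left.2 ?_
    rintro _ ⟨rfl, -⟩ ⟨l, hl, hal⟩
    obtain ⟨m, -, -, hl, -⟩ := Set.mem_iUnion₂.1 hl
    obtain rfl : l = [] := List.cons_injective hal
    simp at hl
  have hpair : Set.PairwiseDisjoint {m | A a m} (pathSet A · b) := by
    refine fun m _ m' _ hmm' => Set.disjoint_left.2 fun l hl hl' => hmm' ?_
    exact Option.some_injective _ (hl.2.1.symm.trans hl'.2.1)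
  rw [pathSum, pathSet_eq_union, finsum_mem_union hdisj ((Set.finite_singleton [a]).subset
    fun l hl => hl.1) (((Set.toFinite _).biUnion fun m _ => hfin m b).image _),
    finsum_mem_image List.cons_injective.injOn, finsum_mem_biUnion hpair (Set.toFinite _)
    fun m _ => hfin m b]
  congr 1
  · split_ifs with hab
    · subst hab
      simp [pathWeight]
    · simp [hab]
  · rw [show {m | A a m} = ↑(Finset.univ.filter (A a)) by ext; simp, finsum_mem_coe_finset]
    refine Finset.sum_congr rfl fun m _ => ?_
    rw [pathSum, mul_finsum_mem]
    refine finsum_mem_congr rfl fun l hl => ?_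
    obtain ⟨l, rfl⟩ : ∃ l', l = m :: l' := by
      obtain ⟨-, hm, -⟩ := hl
      cases l <;> simp_all
    exact pathWeight_cons_cons c a m l

theorem sum_pathSum_mul_eq [Fintype V] [Preorder V] (hA : ∀ j k, A j k → j < k)
    (hc : ∀ k m, ¬ A m k → c k m = 0) {w h : V → ℝ} (hw : ∀ b, w b = h b + ∑ m, c b m * w m)
    (b : V) : ∑ a, pathSum A c a b * h a = w b := by
  classical
  have hcol : ∀ m, ∑ a, pathSum A c a b * c a m = pathSum A c m b - if m = b then 1 else 0 := by
    intro m
    rw [pathSum_eq_ite_add_sum c hA m b, Finset.sum_filter_of_ne fun a _ hne => ?_]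
    · simp_rw [mul_comm (pathSum A c _ b)]
      ring
    · by_contra hma
      simp [hc a m hma] at hne
  have hh : ∀ a, h a = w a - ∑ m, c a m * w m := fun a => by rw [hw a]; ring
  calc ∑ a, pathSum A c a b * h a
      = ∑ a, pathSum A c a b * w a - ∑ m, (∑ a, pathSum A c a b * c a m) * w m := by
        simp_rw [hh, mul_sub, Finset.mul_sum, Finset.sum_mul, Finset.sum_sub_distrib]
        rw [Finset.sum_comm (f := fun _ _ => _ * (_ * _))]
        simp_rw [mul_assoc]
    _ = w b := by
        simp_rw [hcol, sub_mul, Finset.sum_sub_distrib, ite_mul, one_mul, zero_mul,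
          Finset.sum_ite_eq', Finset.mem_univ, if_true, sub_sub_cancel]

end PathSum

section Calculus

variable {E : Type*} [NormedAddCommGroup E] [NormedSpace ℝ E]

theorem ContinuousLinearMap.apply_eq_sum_mul_single {ι : Type*} [Fintype ι] [DecidableEq ι]
    (L : (ι → ℝ) →L[ℝ] ℝ) (d : ι → ℝ) : L d = ∑ m, d m * L (Pi.single m 1) := by
  conv_lhs => rw [pi_eq_sum_univ' d]
  simp [map_sum]

theorem eq_of_fderiv_single_eq_zero {ι : Type*} [Fintype ι] [DecidableEq ι]
    {ψ : (ι → ℝ) → ℝ} (hψ : Differentiable ℝ ψ) {Q : ι → Prop}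
    (h0 : ∀ m, ¬ Q m → ∀ w, fderiv ℝ ψ w (Pi.single m 1) = 0) {w w' : ι → ℝ}
    (hww' : ∀ m, Q m → w m = w' m) : ψ w = ψ w' := by
  set d := w' - w
  have hd : ∀ z, fderiv ℝ ψ z d = 0 := fun z => by
    rw [ContinuousLinearMap.apply_eq_sum_mul_single]
    refine Finset.sum_eq_zero fun m _ => ?_
    by_cases hm : Q m
    · simp [d, hww' m hm]
    · simp [h0 m hm]
  have hline : ∀ t : ℝ, HasDerivAt (fun t : ℝ => ψ (w + t • d)) (fderiv ℝ ψ (w + t • d) d) t :=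
    fun t => by
      have := ((hasDerivAt_id t).smul_const d).const_add w
      exact (hψ _).hasFDerivAt.comp_hasDerivAt t (by simpa using this)
  have := is_const_of_deriv_eq_zero (fun t => (hline t).differentiableAt)
    (fun t => (hline t).deriv.trans (hd _)) 0 1
  simpa [d] using this

variable {N : ℕ}

theorem H2_eq_zero_of_fderiv_single_eq_zero {g : (Fin N → ℝ) → ℝ} {k : Fin N}
    (h : ∀ w, fderiv ℝ g w (Pi.single k 1) = 0) (x : Fin N → ℝ) (j : Fin N) : H2 g x j k = 0 := by
  simp [H2, h]

theorem H2_comm {g : (Fin N → ℝ) → ℝ} (hg : ContDiff ℝ 2 g) (x : Fin N → ℝ) (j k : Fin N) :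
    H2 g x j k = H2 g x k j := by
  have hdiff : DifferentiableAt ℝ (fderiv ℝ g) x :=
    (hg.fderiv_right (m := 1) (by norm_num)).differentiable (by norm_num) x
  simp only [H2, fderiv_clm_apply hdiff (differentiableAt_const _), fderiv_const_apply]
  simpa using (hg.contDiffAt.isSymmSndFDerivAt (by simp)) (Pi.single j 1) (Pi.single k 1)

theorem fderiv_comp_apply_eq_sum {ψ : (Fin N → ℝ) → ℝ} {U : E → Fin N → ℝ} {y : E}
    (hψ : DifferentiableAt ℝ ψ (U y)) (hU : DifferentiableAt ℝ U y) (d : E) :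
    fderiv ℝ (fun y => ψ (U y)) y d =
      ∑ m, fderiv ℝ ψ (U y) (Pi.single m 1) * fderiv ℝ (fun y => U y m) y d := by
  rw [fderiv_fun_comp y hψ hU, ContinuousLinearMap.comp_apply,
    ContinuousLinearMap.apply_eq_sum_mul_single]
  refine Finset.sum_congr rfl fun m _ => ?_
  rw [fderiv_apply hU m, mul_comm]
  rfl

theorem fderiv_fderiv_comp_apply_eq_sum {ψ : (Fin N → ℝ) → ℝ} {U : E → Fin N → ℝ}
    (hψ : ContDiff ℝ 2 ψ) (hU : ContDiff ℝ 2 U) (y d d' : E) :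
    fderiv ℝ (fun y => fderiv ℝ (fun y => ψ (U y)) y d) y d' =
      ∑ m, ((∑ s, H2 ψ (U y) s m * fderiv ℝ (fun y => U y s) y d') *
          fderiv ℝ (fun y => U y m) y d +
        fderiv ℝ ψ (U y) (Pi.single m 1) *
          fderiv ℝ (fun y => fderiv ℝ (fun y => U y m) y d) y d') := by
  have hU1 : Differentiable ℝ U := hU.differentiable (by norm_num)
  have hpψ : ∀ m, Differentiable ℝ fun w => fderiv ℝ ψ w (Pi.single m 1) := fun m =>
    ((hψ.fderiv_right (m := 1) (by norm_num)).clm_apply contDiff_const).differentiable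
      (by norm_num)
  have hpU : ∀ m, Differentiable ℝ fun y => fderiv ℝ (fun y => U y m) y d := fun m =>
    (((contDiff_pi.1 hU m).fderiv_right (m := 1) (by norm_num)).clm_apply
      contDiff_const).differentiable (by norm_num)
  have hfirst : (fun y => fderiv ℝ (fun y => ψ (U y)) y d) = fun y =>
      ∑ m, fderiv ℝ ψ (U y) (Pi.single m 1) * fderiv ℝ (fun y => U y m) y d :=
    funext fun y => fderiv_comp_apply_eq_sum (hψ.differentiable (by norm_num) _) (hU1 y) d
  have hpψU : ∀ m, DifferentiableAt ℝ (fun y => fderiv ℝ ψ (U y) (Pi.single m 1)) y :=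
    fun m => (hpψ m (U y)).comp y (hU1 y)
  rw [hfirst, fderiv_fun_sum (A := fun m y => fderiv ℝ ψ (U y) (Pi.single m 1) *
      fderiv ℝ (fun y => U y m) y d) fun m _ => (hpψU m).mul (hpU m y), _root_.sum_apply]
  refine Finset.sum_congr rfl fun m _ => ?_
  rw [fderiv_fun_mul (hpψU m) (hpU m y), add_apply, smul_apply,
    smul_apply, smul_eq_mul, smul_eq_mul,
    fderiv_comp_apply_eq_sum (hpψ m _) (hU1 y)]
  simp only [H2]
  ring

end Calculus

section RunFrom

variable {N : ℕ} (φ : Fin N → (Fin N → ℝ) → ℝ)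

theorem runFrom_apply_of_lt (t s : ℕ) (w : Fin N → ℝ) {q : Fin N} (hq : (q : ℕ) < t) :
    runFrom N φ t s w q = w q := by
  induction s with
  | zero => rfl
  | succ s ih =>
    simp only [runFrom]
    split_ifs
    · rw [Function.update_of_ne (Fin.ne_of_val_ne (by simp; omega)), ih]
    · exact ih

theorem runFrom_succ_apply_of_ne (t s : ℕ) (w : Fin N → ℝ) {q : Fin N} (hq : (q : ℕ) ≠ t + s) :
    runFrom N φ t (s + 1) w q = runFrom N φ t s w q := by
  simp only [runFrom]
  split_ifs
  · exact Function.update_of_ne (Fin.ne_of_val_ne hq) _ _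
  · rfl

theorem runFrom_succ_apply_self (t s : ℕ) (w : Fin N → ℝ) (h : t + s < N) :
    runFrom N φ t (s + 1) w ⟨t + s, h⟩ = φ ⟨t + s, h⟩ (runFrom N φ t s w) := by
  simp [runFrom, h]

theorem runFrom_apply_of_le
    (hφ : ∀ q w w', (∀ m, m < q → w m = w' m) → φ q w = φ q w') (t s : ℕ) (w : Fin N → ℝ)
    {q : Fin N} (htq : t ≤ q) (hqs : (q : ℕ) < t + s) :
    runFrom N φ t s w q = φ q (runFrom N φ t s w) := by
  induction s with
  | zero => omega
  | succ s ih =>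
    rw [hφ q _ (runFrom N φ t s w) fun m hm => runFrom_succ_apply_of_ne φ t s w (by omega)]
    by_cases hq : (q : ℕ) = t + s
    · have h : t + s < N := hq ▸ q.isLt
      obtain rfl : q = ⟨t + s, h⟩ := Fin.ext hq
      exact runFrom_succ_apply_self φ t s w h
    · rw [runFrom_succ_apply_of_ne φ t s w hq, ih (by omega)]

theorem contDiff_runFrom {k : WithTop ℕ∞} (hφ : ∀ q, ContDiff ℝ k (φ q)) (t s : ℕ) :
    ContDiff ℝ k (runFrom N φ t s) := by
  induction s with
  | zero => exact contDiff_id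
  | succ s ih =>
    refine contDiff_pi.2 fun q => ?_
    by_cases hq : (q : ℕ) = t + s
    · have h : t + s < N := hq ▸ q.isLt
      obtain rfl : q = ⟨t + s, h⟩ := Fin.ext hq
      simp only [runFrom_succ_apply_self φ t s _ h]
      exact (hφ _).comp ih
    · simpa only [runFrom_succ_apply_of_ne φ t s _ hq] using contDiff_pi.1 ih q

end RunFrom

section ComputationalGraph

variable {n ℓ : ℕ} {A : Fin (n + ℓ) → Fin (n + ℓ) → Prop}
  {φ : Fin (n + ℓ) → (Fin (n + ℓ) → ℝ) → ℝ}

/-- Nodes `0, …, n-1` are the independent variables, `A j k` is the precedence `j ≺ k`, and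
the elemental function `φ k` depends only on the predecessors of `k`. -/
structure IsComputationalGraph (n ℓ : ℕ) (A : Fin (n + ℓ) → Fin (n + ℓ) → Prop)
    (φ : Fin (n + ℓ) → (Fin (n + ℓ) → ℝ) → ℝ) : Prop where
  lt_of_arc : ∀ j k, A j k → j < k
  le_of_arc : ∀ j k, A j k → n ≤ (k : ℕ)
  contDiff : ∀ k, ContDiff ℝ 2 (φ k)
  fderiv_single_eq_zero : ∀ k j, ¬ A j k → ∀ w, fderiv ℝ (φ k) w (Pi.single j 1) = 0

noncomputable def evalGraph (φ : Fin (n + ℓ) → (Fin (n + ℓ) → ℝ) → ℝ) (x : Fin n → ℝ) :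
    Fin (n + ℓ) → ℝ :=
  runFrom (n + ℓ) φ n ℓ (fun t => if h : (t : ℕ) < n then x ⟨t, h⟩ else 0)

noncomputable def arcWeight {N : ℕ} (φ : Fin N → (Fin N → ℝ) → ℝ) (v : Fin N → ℝ) (k m : Fin N) :
    ℝ :=
  fderiv ℝ (φ k) v (Pi.single m 1)

theorem evalGraph_apply_of_lt (φ : Fin (n + ℓ) → (Fin (n + ℓ) → ℝ) → ℝ) (x : Fin n → ℝ)
    {b : Fin (n + ℓ)} (hb : (b : ℕ) < n) : evalGraph φ x b = x ⟨b, hb⟩ := by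
  rw [evalGraph, runFrom_apply_of_lt φ n ℓ _ hb, dif_pos hb]

theorem contDiff_evalGraph {k : WithTop ℕ∞} (hφ : ∀ q, ContDiff ℝ k (φ q)) :
    ContDiff ℝ k (evalGraph (n := n) φ) := by
  refine (contDiff_runFrom φ hφ n ℓ).comp (contDiff_pi.2 fun t => ?_)
  by_cases h : (t : ℕ) < n
  · simp only [h, dite_true]
    exact contDiff_apply ℝ ℝ _
  · simp only [h, dite_false]
    exact contDiff_const

namespace IsComputationalGraph

theorem elemental_congr (hG : IsComputationalGraph n ℓ A φ) (k : Fin (n + ℓ))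
    {w w' : Fin (n + ℓ) → ℝ} (h : ∀ m, m < k → w m = w' m) : φ k w = φ k w' :=
  eq_of_fderiv_single_eq_zero ((hG.contDiff k).differentiable (by norm_num))
    (hG.fderiv_single_eq_zero k) fun m hm => h m (hG.lt_of_arc m k hm)

theorem not_arc_of_lt (hG : IsComputationalGraph n ℓ A φ) {k : Fin (n + ℓ)} (hk : (k : ℕ) < n)
    (m : Fin (n + ℓ)) : ¬ A m k := fun h => by
  have := hG.le_of_arc m k h
  omega

theorem arcWeight_eq_zero (hG : IsComputationalGraph n ℓ A φ) {k m : Fin (n + ℓ)} (h : ¬ A m k)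
    (v : Fin (n + ℓ) → ℝ) : arcWeight φ v k m = 0 :=
  hG.fderiv_single_eq_zero k m h v

theorem H2_eq_zero (hG : IsComputationalGraph n ℓ A φ) {k r s : Fin (n + ℓ)} (h : ¬ (A r k ∧ A s k))
    (w : Fin (n + ℓ) → ℝ) : H2 (φ k) w r s = 0 := by
  rcases not_and_or.1 h with hr | hs
  · rw [H2_comm (hG.contDiff k)]
    exact H2_eq_zero_of_fderiv_single_eq_zero (hG.fderiv_single_eq_zero k r hr) w s
  · exact H2_eq_zero_of_fderiv_single_eq_zero (hG.fderiv_single_eq_zero k s hs) w r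

theorem evalGraph_apply_of_le (hG : IsComputationalGraph n ℓ A φ)
    (x : Fin n → ℝ) {b : Fin (n + ℓ)} (hb : n ≤ (b : ℕ)) : evalGraph φ x b = φ b (evalGraph φ x) :=
  runFrom_apply_of_le φ (fun q _ _ => hG.elemental_congr q) n ℓ _ hb b.isLt

theorem fderiv_evalGraph_apply (hG : IsComputationalGraph n ℓ A φ) (x : Fin n → ℝ) (i : Fin n)
    (b : Fin (n + ℓ)) :
    fderiv ℝ (fun y => evalGraph φ y b) x (Pi.single i 1) =
      (if Fin.castAdd ℓ i = b then 1 else 0) +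
        ∑ m, arcWeight φ (evalGraph φ x) b m *
          fderiv ℝ (fun y => evalGraph φ y m) x (Pi.single i 1) := by
  by_cases hb : (b : ℕ) < n
  · have hin : (fun y => evalGraph φ y b) =
        ContinuousLinearMap.proj (R := ℝ) (φ := fun _ : Fin n => ℝ) ⟨b, hb⟩ :=
      funext fun y => evalGraph_apply_of_lt φ y hb
    simp [hin, hG.arcWeight_eq_zero (hG.not_arc_of_lt hb _), Pi.single_apply, Fin.ext_iff,
      eq_comm]
  · have hint : (fun y => evalGraph φ y b) = fun y => φ b (evalGraph φ y) :=
      funext fun y => hG.evalGraph_apply_of_le y (not_lt.1 hb)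
    have hne : Fin.castAdd ℓ i ≠ b := fun h => hb (h ▸ i.isLt)
    rw [hint, fderiv_comp_apply_eq_sum ((hG.contDiff b).differentiable (by norm_num) _)
      ((contDiff_evalGraph hG.contDiff).differentiable (by norm_num) x), if_neg hne, zero_add]
    rfl

theorem fderiv_fderiv_evalGraph_apply (hG : IsComputationalGraph n ℓ A φ) (x : Fin n → ℝ)
    (i j : Fin n) (b : Fin (n + ℓ)) :
    fderiv ℝ (fun y => fderiv ℝ (fun y => evalGraph φ y b) y (Pi.single j 1)) x (Pi.single i 1) =
      ∑ m, (∑ s, H2 (φ b) (evalGraph φ x) s m *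
          fderiv ℝ (fun y => evalGraph φ y s) x (Pi.single i 1)) *
          fderiv ℝ (fun y => evalGraph φ y m) x (Pi.single j 1) +
        ∑ m, arcWeight φ (evalGraph φ x) b m *
          fderiv ℝ (fun y => fderiv ℝ (fun y => evalGraph φ y m) y (Pi.single j 1)) x
            (Pi.single i 1) := by
  by_cases hb : (b : ℕ) < n
  · have hin : (fun y => evalGraph φ y b) =
        ContinuousLinearMap.proj (R := ℝ) (φ := fun _ : Fin n => ℝ) ⟨b, hb⟩ :=
      funext fun y => evalGraph_apply_of_lt φ y hb
    simp [hin, hG.arcWeight_eq_zero (hG.not_arc_of_lt hb _),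
      hG.H2_eq_zero (fun h => hG.not_arc_of_lt hb _ h.1)]
  · have hint : (fun y => evalGraph φ y b) = fun y => φ b (evalGraph φ y) :=
      funext fun y => hG.evalGraph_apply_of_le y (not_lt.1 hb)
    rw [hint, fderiv_fderiv_comp_apply_eq_sum (hG.contDiff b) (contDiff_evalGraph hG.contDiff),
      Finset.sum_add_distrib]
    rfl

theorem fderiv_evalGraph_eq_pathSum (hG : IsComputationalGraph n ℓ A φ) (x : Fin n → ℝ) (i : Fin n)
    (b : Fin (n + ℓ)) :
    fderiv ℝ (fun y => evalGraph φ y b) x (Pi.single i 1) =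
      pathSum A (arcWeight φ (evalGraph φ x)) (Fin.castAdd ℓ i) b := by
  rw [← sum_pathSum_mul_eq _ hG.lt_of_arc (fun _ _ h => hG.arcWeight_eq_zero h _)
    (hG.fderiv_evalGraph_apply x i)]
  simp

theorem hessian_evalGraph_eq_sum (hG : IsComputationalGraph n ℓ A φ) (x : Fin n → ℝ) (i j : Fin n)
    (b : Fin (n + ℓ)) :
    fderiv ℝ (fun y => fderiv ℝ (fun y => evalGraph φ y b) y (Pi.single j 1)) x (Pi.single i 1) =
      ∑ r, ∑ s, pathSum A (arcWeight φ (evalGraph φ x)) (Fin.castAdd ℓ i) r *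
        (∑ k, pathSum A (arcWeight φ (evalGraph φ x)) k b * H2 (φ k) (evalGraph φ x) r s) *
        pathSum A (arcWeight φ (evalGraph φ x)) (Fin.castAdd ℓ j) s := by
  have hrec := hG.fderiv_fderiv_evalGraph_apply x i j
  simp only [hG.fderiv_evalGraph_eq_pathSum x] at hrec
  rw [← sum_pathSum_mul_eq _ hG.lt_of_arc (fun _ _ h => hG.arcWeight_eq_zero h _) hrec]
  simp only [Finset.mul_sum, Finset.sum_mul]
  rw [Finset.sum_comm]
  refine (Finset.sum_congr rfl fun m _ => Finset.sum_comm).trans Finset.sum_comm |>.trans ?_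
  exact Finset.sum_congr rfl fun r _ => Finset.sum_congr rfl fun s _ =>
    Finset.sum_congr rfl fun k _ => by ring

end IsComputationalGraph

end ComputationalGraph

theorem hessian_path_partition_general (n ℓ : ℕ)
    (A : Fin (n+ℓ) → Fin (n+ℓ) → Prop) [DecidableRel A]
    (hA : ∀ j k, A j k → j < k)
    (hAint : ∀ j k, A j k → n ≤ (k : ℕ))
    (φ : Fin (n+ℓ) → (Fin (n+ℓ) → ℝ) → ℝ)
    (hC : ∀ k, ContDiff ℝ 2 (φ k))
    (hdep : ∀ k j, ¬ A j k → ∀ w, fderiv ℝ (φ k) w (Pi.single j 1) = 0)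
    (lastIdx : Fin (n+ℓ))
    (x : Fin n → ℝ)
    (f : (Fin n → ℝ) → ℝ)
    (hf : ∀ x', f x' = runFrom (n+ℓ) φ n ℓ
      (fun t => if h : (t : ℕ) < n then x' ⟨t, h⟩ else 0) lastIdx)
    (v : Fin (n+ℓ) → ℝ)
    (hv : v = runFrom (n+ℓ) φ n ℓ (fun t => if h : (t : ℕ) < n then x ⟨t, h⟩ else 0))
    (c : Fin (n+ℓ) → Fin (n+ℓ) → ℝ)
    (hc : ∀ k m, c k m = fderiv ℝ (φ k) v (Pi.single m 1))
    (PS : Fin (n+ℓ) → Fin (n+ℓ) → ℝ)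
    (hPS : ∀ a b, PS a b = ∑ᶠ (l : List (Fin (n+ℓ)))
        (_ : l.Chain' A ∧ l.head? = some a ∧ l.getLast? = some b), pathWeight c l)
    (vbar : Fin (n+ℓ) → ℝ) (hvbar : ∀ k, vbar k = PS k lastIdx)
    (c2 : Fin (n+ℓ) → Fin (n+ℓ) → ℝ)
    (hc2 : ∀ r s, c2 r s = ∑ k ∈ Finset.univ.filter (fun k => A r k ∧ A s k),
        vbar k * H2 (φ k) v r s)
    (i j : Fin n) :
    H2 f x i j = ∑ r : Fin (n+ℓ), ∑ s : Fin (n+ℓ),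
      PS (Fin.castAdd ℓ i) r * c2 r s * PS (Fin.castAdd ℓ j) s := by
  have hG : IsComputationalGraph n ℓ A φ := ⟨hA, hAint, hC, hdep⟩
  obtain rfl : f = fun x' => evalGraph φ x' lastIdx := funext hf
  obtain rfl : v = evalGraph φ x := hv
  obtain rfl : c = arcWeight φ (evalGraph φ x) := funext₂ hc
  obtain rfl : PS = pathSum A (arcWeight φ (evalGraph φ x)) := funext₂ hPS
  have hc2' : ∀ r s, c2 r s = ∑ k, pathSum A (arcWeight φ (evalGraph φ x)) k lastIdx *
      H2 (φ k) (evalGraph φ x) r s := fun r s => by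
    rw [hc2, Finset.sum_filter]
    refine Finset.sum_congr rfl fun k _ => ?_
    split_ifs with hk
    · rw [hvbar]
    · rw [hG.H2_eq_zero hk, mul_zero]
  simp only [hc2']
  exact hG.hessian_evalGraph_eq_sum x i j lastIdx

/-- the Hessian as a sum over nonlinear arcs:
∂²f/∂x_i∂x_j = Σ_{(r,s̄)} [ (Σ_{p : i→r} weight p) · c^{s̄}_r · (Σ_{q : j→s} weight q) ],
where `PS a b` is the sum of the weights of the directed paths from a to b in
the computational graph (first-order arc weights c k m = ∂φ_k/∂v_m at the
evaluated point), and the nonlinear-arc weight is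
c2 r s = c^{s̄}_r = Σ_{k : r≺k, s≺k} v̄_k ∂²φ_k/∂v_r∂v_s with v̄_k = ∂f/∂v_k the
adjoint (sum of path weights from k to the output node); pairs (r,s) that are
not nonlinear arcs contribute zero weight. -/
theorem hessian_path_partition (n ℓ : ℕ) (hℓ : 0 < ℓ)
    (A : Fin (n+ℓ) → Fin (n+ℓ) → Prop) [DecidableRel A]
    (hA : ∀ j k, A j k → j < k)
    (hAint : ∀ j k, A j k → n ≤ (k : ℕ))
    (φ : Fin (n+ℓ) → (Fin (n+ℓ) → ℝ) → ℝ)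
    (hC : ∀ k, ContDiff ℝ 2 (φ k))
    (hdep : ∀ k j, ¬ A j k → ∀ w, fderiv ℝ (φ k) w (Pi.single j 1) = 0)
    (lastIdx : Fin (n+ℓ)) (hlast : (lastIdx : ℕ) = n + ℓ - 1)
    (x : Fin n → ℝ)
    (f : (Fin n → ℝ) → ℝ)
    (hf : ∀ x', f x' = runFrom (n+ℓ) φ n ℓ
      (fun t => if h : (t : ℕ) < n then x' ⟨t, h⟩ else 0) lastIdx)
    (v : Fin (n+ℓ) → ℝ)
    (hv : v = runFrom (n+ℓ) φ n ℓ (fun t => if h : (t : ℕ) < n then x ⟨t, h⟩ else 0))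
    (c : Fin (n+ℓ) → Fin (n+ℓ) → ℝ)
    (hc : ∀ k m, c k m = fderiv ℝ (φ k) v (Pi.single m 1))
    (PS : Fin (n+ℓ) → Fin (n+ℓ) → ℝ)
    (hPS : ∀ a b, PS a b = ∑ᶠ (l : List (Fin (n+ℓ)))
        (_ : l.Chain' A ∧ l.head? = some a ∧ l.getLast? = some b), pathWeight c l)
    (vbar : Fin (n+ℓ) → ℝ) (hvbar : ∀ k, vbar k = PS k lastIdx)
    (c2 : Fin (n+ℓ) → Fin (n+ℓ) → ℝ)
    (hc2 : ∀ r s, c2 r s = ∑ k ∈ Finset.univ.filter (fun k => A r k ∧ A s k),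
        vbar k * H2 (φ k) v r s)
    (i j : Fin n) :
    H2 f x i j = ∑ r : Fin (n+ℓ), ∑ s : Fin (n+ℓ),
      PS (Fin.castAdd ℓ i) r * c2 r s * PS (Fin.castAdd ℓ j) s :=
  hessian_path_partition_general n ℓ A hA hAint φ hC hdep lastIdx x f hf v hv c hc PS hPS vbar hvbar
    c2 hc2 i j
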